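/- For each a ∈ I with a > 0: β(u_0) = u_0, β(u_a) = u_a, and β(u_{−a}) = u_{−a} + (v^{L_0} − v^{−L_0})·u_a. Consequently, the ȷ-canonical basis of V_L is: b_{u_0} = u_0, b_{u_a} = u_a for a > 0, together with b_{u_{−a}} = u_{−a} if L_0 = 0, b_{u_{−a}} = u_{−a} + v^{L_0}·u_a if L_0 > 0, and b_{u_{−a}} = u_{−a} − v^{−L_0}·u_a if L_0 < 0; i.e. in each case b_{u_{−a}} is the unique β-invariant element of the form u_{−a} + (an element of v·ℤ[v]·u_a). -/

import Mathlib

attribute [local instance] Classical.propDecidable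

noncomputable section

/-- The field `ℚ(v)`. -/
abbrev Kv : Type := RatFunc ℚ

/-- The indeterminate `v`. -/
noncomputable def vv : Kv := RatFunc.X

/-- The index set `I = {-r, -r+1, ..., r}` of integers, as a subtype of `ℚ`. -/
def IIdx (r : ℕ) : Type := {a : ℚ // ∃ k : ℤ, -(r : ℤ) ≤ k ∧ k ≤ r ∧ a = (k : ℚ)}

instance (r : ℕ) : DecidableEq (IIdx r) := fun a b =>
  decidable_of_iff (a.1 = b.1) Subtype.ext_iff.symm

/-- Negation on the index set. -/
def IIdx.neg {r : ℕ} (a : IIdx r) : IIdx r :=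
  ⟨-a.1, by
    obtain ⟨k, h1, h2, h3⟩ := a.2
    exact ⟨-k, by omega, by omega, by rw [h3]; push_cast; ring⟩⟩

/-- The space `V_L`, the free `ℚ(v)`-module on `I`. -/
abbrev VL (r : ℕ) : Type := IIdx r →₀ Kv

/-- The basis vector `u_a`. -/
noncomputable def uv {r : ℕ} (a : IIdx r) : VL r := Finsupp.single a 1

/-- The Hecke operator `H_0` on `V_L` (odd case): `u_0 H_0 = v^{-L_0} u_0`,
`u_a H_0 = u_{-a}` if `a > 0`, and `u_a H_0 = u_{-a} + (v^{-L_0} - v^{L_0}) u_a` if `a < 0`. -/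
noncomputable def H0L (r : ℕ) (L0 : ℤ) : Module.End Kv (VL r) :=
  Finsupp.lift (VL r) Kv (IIdx r) (fun a =>
    if a.1 = 0 then (vv ^ (-L0)) • uv a
    else if 0 < a.1 then uv a.neg
    else uv a.neg + (vv ^ (-L0) - vv ^ L0) • uv a)

/-- The conditions characterizing the bar involution `β` on `V_L` (odd case). -/
def betaCondV (r : ℕ) (L0 : ℤ) (bar : Kv →+* Kv) (β : VL r →+ VL r) : Prop :=
  (∀ (c : Kv) (x : VL r), β (c • x) = bar c • β x) ∧
  (∀ a : IIdx r, 0 ≤ a.1 → β (uv a) = uv a) ∧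
  (∀ x : VL r, β (H0L r L0 x) = (H0L r L0 + (vv ^ L0 - vv ^ (-L0)) • 1) (β x))

/-- Membership in `v · ℤ[v] ⊆ ℚ(v)`. -/
def inVZv (c : Kv) : Prop :=
  ∃ P : Polynomial ℤ, c = algebraMap (Polynomial ℚ) Kv (Polynomial.X * P.map (Int.castRingHom ℚ))

/-- The ȷ-canonical basis vector attached to `u_{-a}` (`a > 0`). -/
noncomputable def canB (r : ℕ) (L0 : ℤ) (a : IIdx r) : VL r :=
  if 0 < L0 then uv a.neg + (vv ^ L0) • uv a
  else if L0 < 0 then uv a.neg - (vv ^ (-L0)) • uv a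
  else uv a.neg

/-!
For `a > 0`, `H_0` sends `u_a` to `u_{-a}`, so compatibility of `β` with `H_0` forces
`β(u_{-a}) = u_{-a} + (v^{L_0} - v^{-L_0}) u_a`, hence
`β(u_{-a} + c u_a) = u_{-a} + (v^{L_0} - v^{-L_0} + c̄) u_a`. The coefficient of `canB` solves
`c̄ = c + v^{-L_0} - v^{L_0}`, and two solutions in `v ℤ[v]` differ by a bar-invariant element of
`v ℤ[v]`, which vanishes because the only polynomials fixed by `v ↦ v⁻¹` are the constants.
-/

open Polynomial

namespace RatFunc

variable {K : Type*} [Field K]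

theorem map_algebraMap_eq_eval₂_inv (σ : RatFunc K →+* RatFunc K)
    (hσC : ∀ a, σ (RatFunc.C a) = RatFunc.C a) (hσ : σ X = X⁻¹) (p : K[X]) :
    σ (algebraMap K[X] (RatFunc K) p) = p.eval₂ RatFunc.C X⁻¹ := by
  rw [← aeval_X_left_eq_algebraMap, aeval_def, algebraMap_eq_C, hom_eval₂, hσ,
    show σ.comp RatFunc.C = RatFunc.C from RingHom.ext hσC]

/-- `p(X⁻¹) X^N` is the reversal of `p`, of degree at most `N = deg p`, while `p X^N` has degree
`2N`; so `N = 0`. -/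
theorem natDegree_eq_zero_of_map_algebraMap_eq_self (σ : RatFunc K →+* RatFunc K)
    (hσC : ∀ a, σ (RatFunc.C a) = RatFunc.C a) (hσ : σ X = X⁻¹) {p : K[X]}
    (hp : σ (algebraMap K[X] (RatFunc K) p) = algebraMap _ _ p) : p.natDegree = 0 := by
  set N := p.natDegree
  have : Invertible (X⁻¹ : RatFunc K) := invertibleOfNonzero (inv_ne_zero X_ne_zero)
  have hrev : algebraMap K[X] (RatFunc K) (reflect N p) * (X⁻¹) ^ N = algebraMap _ _ p := by
    rw [← hp, map_algebraMap_eq_eval₂_inv σ hσC hσ, ← eval₂_reflect_mul_pow _ _ N p le_rfl,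
      invOf_eq_inv, inv_inv, ← aeval_X_left_eq_algebraMap, aeval_def, algebraMap_eq_C]
  have hpoly : reflect N p = p * Polynomial.X ^ N := by
    apply algebraMap_injective K
    rw [map_mul, map_pow, algebraMap_X, ← hrev, mul_assoc, ← mul_pow, inv_mul_cancel₀ X_ne_zero,
      one_pow, mul_one]
  by_cases hp0 : p = 0
  · simp [N, hp0]
  have hdeg := natDegree_reflect_le (N := N) (p := p)
  rw [hpoly, natDegree_mul hp0 (pow_ne_zero _ Polynomial.X_ne_zero), natDegree_X_pow,
    max_self] at hdeg
  omega

theorem eq_zero_of_X_dvd_of_map_algebraMap_eq_self (σ : RatFunc K →+* RatFunc K)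
    (hσC : ∀ a, σ (RatFunc.C a) = RatFunc.C a) (hσ : σ X = X⁻¹) {p : K[X]}
    (hX : Polynomial.X ∣ p) (hp : σ (algebraMap K[X] (RatFunc K) p) = algebraMap _ _ p) :
    p = 0 := by
  rw [eq_C_of_natDegree_eq_zero (natDegree_eq_zero_of_map_algebraMap_eq_self σ hσC hσ hp),
    X_dvd_iff.mp hX, map_zero]

end RatFunc

theorem vv_eq_X : vv = RatFunc.X := rfl

theorem inVZv_zero : inVZv 0 := ⟨0, by simp⟩

theorem inVZv.sub {c d : Kv} (hc : inVZv c) (hd : inVZv d) : inVZv (c - d) := by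
  obtain ⟨p, rfl⟩ := hc
  obtain ⟨q, rfl⟩ := hd
  exact ⟨p - q, by rw [Polynomial.map_sub, mul_sub, map_sub]⟩

theorem inVZv.neg {c : Kv} (hc : inVZv c) : inVZv (-c) := by
  simpa using inVZv_zero.sub hc

theorem inVZv_zpow {n : ℤ} (hn : 0 < n) : inVZv (vv ^ n) := by
  refine ⟨Polynomial.X ^ (n.toNat - 1), ?_⟩
  rw [Polynomial.map_pow, Polynomial.map_X, ← pow_succ', Nat.sub_add_cancel (by omega), map_pow,
    RatFunc.algebraMap_X, ← vv_eq_X, ← zpow_natCast, Int.toNat_of_nonneg hn.le]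

theorem inVZv.eq_zero_of_map_eq_self {bar : Kv →+* Kv} (hbar : bar vv = vv⁻¹) {c : Kv}
    (hc : inVZv c) (hfix : bar c = c) : c = 0 := by
  obtain ⟨p, rfl⟩ := hc
  have hbarC (q : ℚ) : bar (RatFunc.C q) = RatFunc.C q := by
    rw [eq_ratCast RatFunc.C, map_ratCast]
  rw [RatFunc.eq_zero_of_X_dvd_of_map_algebraMap_eq_self bar hbarC hbar (dvd_mul_right _ _) hfix,
    map_zero]

theorem map_vv_zpow {bar : Kv →+* Kv} (hbar : bar vv = vv⁻¹) (n : ℤ) :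
    bar (vv ^ n) = vv ^ (-n) := by
  rw [map_zpow₀, hbar, inv_zpow, zpow_neg]

def canCoeff (L0 : ℤ) : Kv :=
  if 0 < L0 then vv ^ L0 else if L0 < 0 then -vv ^ (-L0) else 0

theorem canB_eq {r : ℕ} (L0 : ℤ) (a : IIdx r) : canB r L0 a = uv a.neg + canCoeff L0 • uv a := by
  unfold canB canCoeff
  split_ifs <;> simp [sub_eq_add_neg, neg_smul]

theorem inVZv_canCoeff (L0 : ℤ) : inVZv (canCoeff L0) := by
  unfold canCoeff
  split_ifs with hpos hneg
  · exact inVZv_zpow hpos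
  · exact (inVZv_zpow (neg_pos.mpr hneg)).neg
  · exact inVZv_zero

theorem map_canCoeff {bar : Kv →+* Kv} (hbar : bar vv = vv⁻¹) (L0 : ℤ) :
    bar (canCoeff L0) = canCoeff L0 + (vv ^ (-L0) - vv ^ L0) := by
  unfold canCoeff
  split_ifs with hpos hneg
  · rw [map_vv_zpow hbar]; ring
  · rw [map_neg, map_vv_zpow hbar, neg_neg]; ring
  · obtain rfl : L0 = 0 := by omega
    simp

section BarInvolution

variable {r : ℕ} {L0 : ℤ} {bar : Kv →+* Kv} {β : VL r →+ VL r}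

theorem H0L_uv_of_pos {a : IIdx r} (ha : 0 < a.1) : H0L r L0 (uv a) = uv a.neg := by
  rw [uv, H0L, Finsupp.lift_apply, Finsupp.sum_single_index (by simp), one_smul,
    if_neg ha.ne', if_pos ha]

theorem betaCondV.map_uv_neg (hβ : betaCondV r L0 bar β) {a : IIdx r} (ha : 0 < a.1) :
    β (uv a.neg) = uv a.neg + (vv ^ L0 - vv ^ (-L0)) • uv a := by
  have h := hβ.2.2 (uv a)
  rwa [H0L_uv_of_pos ha, hβ.2.1 a ha.le, LinearMap.add_apply, LinearMap.smul_apply,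
    Module.End.one_apply, H0L_uv_of_pos ha] at h

theorem betaCondV.map_uv_neg_add_smul (hβ : betaCondV r L0 bar β) {a : IIdx r} (ha : 0 < a.1)
    (c : Kv) : β (uv a.neg + c • uv a) = uv a.neg + (vv ^ L0 - vv ^ (-L0) + bar c) • uv a := by
  rw [map_add, hβ.map_uv_neg ha, hβ.1, hβ.2.1 a ha.le, add_smul, add_assoc]

theorem betaCondV.map_uv_neg_add_smul_eq_self_iff (hβ : betaCondV r L0 bar β) {a : IIdx r}
    (ha : 0 < a.1) (c : Kv) :
    β (uv a.neg + c • uv a) = uv a.neg + c • uv a ↔ bar c = c + (vv ^ (-L0) - vv ^ L0) := by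
  rw [hβ.map_uv_neg_add_smul ha, add_right_inj, uv, Finsupp.smul_single_one,
    Finsupp.smul_single_one, (Finsupp.single_injective a).eq_iff]
  constructor <;> intro h <;> linear_combination h

end BarInvolution

theorem jCanonical_basis_V_odd_general (r : ℕ) (L0 : ℤ)
    (bar : Kv →+* Kv) (hbar : bar vv = vv⁻¹)
    (β : VL r →+ VL r) (hβ : betaCondV r L0 bar β) :
    (∀ a : IIdx r, a.1 = 0 → β (uv a) = uv a) ∧
    ∀ a : IIdx r, 0 < a.1 →
      β (uv a) = uv a ∧
      β (uv a.neg) = uv a.neg + (vv ^ L0 - vv ^ (-L0)) • uv a ∧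
      β (canB r L0 a) = canB r L0 a ∧
      (∃ c : Kv, inVZv c ∧ canB r L0 a = uv a.neg + c • uv a) ∧
      (∀ y : VL r, β y = y → (∃ c : Kv, inVZv c ∧ y = uv a.neg + c • uv a) →
        y = canB r L0 a) := by
  refine ⟨fun a ha => hβ.2.1 a ha.ge, fun a ha => ⟨hβ.2.1 a ha.le, hβ.map_uv_neg ha, ?_,
    ⟨canCoeff L0, inVZv_canCoeff L0, canB_eq L0 a⟩, ?_⟩⟩
  · rw [canB_eq, hβ.map_uv_neg_add_smul_eq_self_iff ha, map_canCoeff hbar]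
  · rintro y hy ⟨c, hc, rfl⟩
    rw [hβ.map_uv_neg_add_smul_eq_self_iff ha] at hy
    have hdiff : bar (c - canCoeff L0) = c - canCoeff L0 := by
      rw [map_sub, hy, map_canCoeff hbar]; ring
    rw [canB_eq, sub_eq_zero.mp ((hc.sub (inVZv_canCoeff L0)).eq_zero_of_map_eq_self hbar hdiff)]

/-- `β(u_0) = u_0`, and for `a > 0`, `β(u_a) = u_a` and
`β(u_{-a}) = u_{-a} + (v^{L_0} - v^{-L_0}) u_a`; the ȷ-canonical basis of `V_L` consists of
`u_0`, the `u_a` (`a > 0`), and the elements `canB`, each of which is the unique `β`-invariant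
element of the form `u_{-a} + (v ℤ[v])·u_a`. -/
theorem jCanonical_basis_V_odd (r : ℕ) (hr : 1 ≤ r) (L0 : ℤ)
    (bar : Kv →+* Kv) (hbar : bar vv = vv⁻¹)
    (β : VL r →+ VL r) (hβ : betaCondV r L0 bar β) :
    (∀ a : IIdx r, a.1 = 0 → β (uv a) = uv a) ∧
    ∀ a : IIdx r, 0 < a.1 →
      β (uv a) = uv a ∧
      β (uv a.neg) = uv a.neg + (vv ^ L0 - vv ^ (-L0)) • uv a ∧
      β (canB r L0 a) = canB r L0 a ∧
      (∃ c : Kv, inVZv c ∧ canB r L0 a = uv a.neg + c • uv a) ∧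
      (∀ y : VL r, β y = y → (∃ c : Kv, inVZv c ∧ y = uv a.neg + c • uv a) →
        y = canB r L0 a) :=
  jCanonical_basis_V_odd_general r L0 bar hbar β hβ
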